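/- Let (L, A, ω, {{-,-}}) be a double Lie algebroid with zero anchor ω = 0. Define X •_l Y = m({{X,Y}}_l) = {{X,Y}}_l'·{{X,Y}}_l'' and X •_r Y = -m({{X,Y}}_r) = -{{X,Y}}_r'·{{X,Y}}_r''. Then both •_l and •_r are associative products on L. -/

import Mathlib

open TensorProduct MulOpposite

variable (k : Type*) [Field k] [CharZero k]
  (A : Type*) [Ring A] [Algebra k A]
  (L : Type*) [AddCommGroup L] [Module k L]
  [Module A L] [Module Aᵐᵒᵖ L] [SMulCommClass A Aᵐᵒᵖ L]
  [IsScalarTower k A L] [IsScalarTower k Aᵐᵒᵖ L]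
  [SMulCommClass k A L] [SMulCommClass k Aᵐᵒᵖ L]

/-- left action of `a ∈ A` on `L`, as a `k`-linear map. -/
noncomputable def lact (a : A) : L →ₗ[k] L where
  toFun x := a • x
  map_add' := smul_add a
  map_smul' c x := (smul_comm c a x).symm

/-- right action of `a ∈ A` on `L`, as a `k`-linear map. -/
noncomputable def ract (a : A) : L →ₗ[k] L where
  toFun x := op a • x
  map_add' := smul_add (op a)
  map_smul' c x := (smul_comm c (op a) x).symm

/-- `L ⊗ A → L`, `ξ ⊗ a ↦ ξ·a`. -/
noncomputable def ml : L ⊗[k] A →ₗ[k] L :=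
  TensorProduct.lift (LinearMap.mk₂ k (fun x a => op a • x)
    (by intros; simp [smul_add]) (by intros; exact (smul_comm _ _ _).symm)
    (by intros; simp [op_add, add_smul]) (by intros; simp [op_smul, smul_assoc]))

/-- `A ⊗ L → L`, `a ⊗ ξ ↦ a·ξ`. -/
noncomputable def mr : A ⊗[k] L →ₗ[k] L :=
  TensorProduct.lift (LinearMap.mk₂ k (fun a x => a • x)
    (by intros; simp [add_smul]) (by intros; simp [smul_assoc])
    (by intros; simp [smul_add]) (by intros; exact (smul_comm _ _ _).symm))

/-- `{{D₁, -}}_L` applied to the `L`-slot of the `L ⊗ A` component. -/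
noncomputable def LAm (bl : L →ₗ[k] L →ₗ[k] L ⊗[k] A) (D : L) :
    L ⊗[k] A →ₗ[k] L ⊗[k] (A ⊗[k] A) :=
  (TensorProduct.assoc k L A A).toLinearMap ∘ₗ LinearMap.rTensor A (bl D)

/-- `{{D₁, -}}_R` applied to the `L`-slot of the `L ⊗ A` component. -/
noncomputable def Bm (br : L →ₗ[k] L →ₗ[k] A ⊗[k] L) (D : L) :
    L ⊗[k] A →ₗ[k] A ⊗[k] (L ⊗[k] A) :=
  (TensorProduct.assoc k A L A).toLinearMap ∘ₗ LinearMap.rTensor A (br D)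

/-- `τ² : A ⊗ L ⊗ A → L ⊗ A ⊗ A`, `a ⊗ ξ ⊗ b ↦ ξ ⊗ b ⊗ a`. -/
noncomputable def ρ31 : A ⊗[k] (L ⊗[k] A) →ₗ[k] L ⊗[k] (A ⊗[k] A) :=
  (TensorProduct.assoc k L A A).toLinearMap ∘ₗ
    (TensorProduct.comm k A (L ⊗[k] A)).toLinearMap

/-- `τ : L ⊗ A ⊗ A → A ⊗ L ⊗ A`, `ξ ⊗ a ⊗ b ↦ b ⊗ ξ ⊗ a`. -/
noncomputable def ρ12 : L ⊗[k] (A ⊗[k] A) →ₗ[k] A ⊗[k] (L ⊗[k] A) :=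
  (TensorProduct.comm k (L ⊗[k] A) A).toLinearMap ∘ₗ
    (TensorProduct.assoc k L A A).symm.toLinearMap

/-- `τ : A ⊗ L ⊗ A → A ⊗ A ⊗ L`, `a ⊗ ξ ⊗ b ↦ b ⊗ a ⊗ ξ`. -/
noncomputable def ρ23 : A ⊗[k] (L ⊗[k] A) →ₗ[k] A ⊗[k] (A ⊗[k] L) :=
  (TensorProduct.comm k (A ⊗[k] L) A).toLinearMap ∘ₗ
    (TensorProduct.assoc k A L A).symm.toLinearMap

/-- `τ² : L ⊗ A ⊗ A → A ⊗ A ⊗ L`, `ξ ⊗ a ⊗ b ↦ a ⊗ b ⊗ ξ`. -/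
noncomputable def ρ13 : L ⊗[k] (A ⊗[k] A) →ₗ[k] A ⊗[k] (A ⊗[k] L) :=
  (TensorProduct.assoc k A A L).toLinearMap ∘ₗ
    (TensorProduct.comm k L (A ⊗[k] A)).toLinearMap

/-!
With zero anchor every double bracket `{{D, -}}` is `A`-bilinear, so applying it to the `L`-slot
of `ξ ⊗ a` and multiplying everything out gives the same as bracketing with `ξ·a`. Contracting
the first component of the double Jacobi identity by `ξ ⊗ a ⊗ b ↦ ξ·(ab)` therefore turns its
two terms into `X •ₗ (Y •ₗ Z)` and, via antisymmetry, `-((X •ₗ Y) •ₗ Z)`. Likewise the third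
component, contracted by `a ⊗ b ⊗ ξ ↦ a·(b·ξ)`, gives the associativity of `•ᵣ`.
-/

noncomputable def ml₂ : L ⊗[k] (A ⊗[k] A) →ₗ[k] L :=
  ml k A L ∘ₗ LinearMap.lTensor L (LinearMap.mul' k A)

noncomputable def mr₂ : A ⊗[k] (A ⊗[k] L) →ₗ[k] L :=
  mr k A L ∘ₗ LinearMap.lTensor A (mr k A L)

noncomputable def mrComm : L ⊗[k] A →ₗ[k] L :=
  mr k A L ∘ₗ (TensorProduct.comm k L A).toLinearMap

section RightAction

variable {k A L : Type*} [Field k] [Ring A] [Algebra k A] [AddCommGroup L] [Module k L]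
  [Module Aᵐᵒᵖ L] [IsScalarTower k Aᵐᵒᵖ L] [SMulCommClass k Aᵐᵒᵖ L]

@[simp]
lemma ml_tmul (ξ : L) (a : A) : ml k A L (ξ ⊗ₜ a) = op a • ξ := rfl

lemma ml₂_assoc_tmul (w : L ⊗[k] A) (a : A) :
    ml₂ k A L (TensorProduct.assoc k L A A (w ⊗ₜ a))
      = ml k A L (LinearMap.lTensor L (LinearMap.mulRight k a) w) := by
  induction w using TensorProduct.induction_on with
  | zero => simp
  | tmul η b => simp [ml₂]
  | add x y hx hy => simp only [add_tmul, map_add, hx, hy]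

lemma ml₂_ρ31_assoc_tmul (v : A ⊗[k] L) (a : A) :
    ml₂ k A L (ρ31 k A L (TensorProduct.assoc k A L A (v ⊗ₜ a)))
      = ml k A L (TensorProduct.comm k A L (LinearMap.lTensor A (ract k A L a) v)) := by
  induction v using TensorProduct.induction_on with
  | zero => simp
  | tmul b η => simp [ml₂, ρ31, ract, op_mul, mul_smul]
  | add x y hx hy => simp only [add_tmul, map_add, hx, hy]

variable (bl : L →ₗ[k] L →ₗ[k] L ⊗[k] A) (br : L →ₗ[k] L →ₗ[k] A ⊗[k] L) (D : L)

lemma ml₂_LAm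
    (hD : ∀ (Δ : L) (a : A), bl D (op a • Δ) =
      LinearMap.lTensor L (LinearMap.mulRight k a) (bl D Δ))
    (t : L ⊗[k] A) :
    ml₂ k A L (LAm k A L bl D t) = ml k A L (bl D (ml k A L t)) := by
  induction t using TensorProduct.induction_on with
  | zero => simp
  | tmul ξ a => rw [ml_tmul, hD, ← ml₂_assoc_tmul]; rfl
  | add x y hx hy => simp only [map_add, hx, hy]

lemma ml₂_ρ31_Bm
    (hD : ∀ (Δ : L) (a : A), br D (op a • Δ) =
      LinearMap.lTensor A (ract k A L a) (br D Δ))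
    (u : L ⊗[k] A) :
    ml₂ k A L (ρ31 k A L (Bm k A L br D u))
      = ml k A L (TensorProduct.comm k A L (br D (ml k A L u))) := by
  induction u using TensorProduct.induction_on with
  | zero => simp
  | tmul ξ a => rw [ml_tmul, hD, ← ml₂_ρ31_assoc_tmul]; rfl
  | add x y hx hy => simp only [map_add, hx, hy]

variable {bl br}

lemma ml_comm_br_eq_neg (hanti : ∀ D Δ : L, bl D Δ = - (TensorProduct.comm k A L) (br Δ D))
    (Δ : L) : ml k A L (TensorProduct.comm k A L (br D Δ)) = - ml k A L (bl Δ D) := by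
  rw [hanti, map_neg, neg_neg]

end RightAction

section LeftAction

variable {k A L : Type*} [Field k] [Ring A] [Algebra k A] [AddCommGroup L] [Module k L]
  [Module A L] [IsScalarTower k A L] [SMulCommClass k A L]

@[simp]
lemma mr_tmul (a : A) (ξ : L) : mr k A L (a ⊗ₜ ξ) = a • ξ := rfl

@[simp]
lemma mrComm_tmul (ξ : L) (a : A) : mrComm k A L (ξ ⊗ₜ a) = a • ξ := rfl

lemma mr₂_ρ23_assoc_tmul (v : A ⊗[k] L) (a : A) :
    mr₂ k A L (ρ23 k A L (TensorProduct.assoc k A L A (v ⊗ₜ a)))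
      = mr k A L (LinearMap.rTensor L (LinearMap.mulLeft k a) v) := by
  induction v using TensorProduct.induction_on with
  | zero => simp
  | tmul b η => simp [mr₂, ρ23, mul_smul]
  | add x y hx hy => simp only [add_tmul, map_add, hx, hy]

lemma mr₂_ρ13_assoc_tmul (w : L ⊗[k] A) (a : A) :
    mr₂ k A L (ρ13 k A L (TensorProduct.assoc k L A A (w ⊗ₜ a)))
      = mrComm k A L (LinearMap.rTensor A (lact k A L a) w) := by
  induction w using TensorProduct.induction_on with
  | zero => simp
  | tmul η b => simp [mr₂, ρ13, lact]
  | add x y hx hy => simp only [add_tmul, map_add, hx, hy]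

variable (bl : L →ₗ[k] L →ₗ[k] L ⊗[k] A) (br : L →ₗ[k] L →ₗ[k] A ⊗[k] L) (D : L)

lemma mr₂_ρ23_Bm
    (hD : ∀ (Δ : L) (a : A), br D (a • Δ) =
      LinearMap.rTensor L (LinearMap.mulLeft k a) (br D Δ))
    (u : L ⊗[k] A) :
    mr₂ k A L (ρ23 k A L (Bm k A L br D u)) = mr k A L (br D (mrComm k A L u)) := by
  induction u using TensorProduct.induction_on with
  | zero => simp
  | tmul ξ a => rw [mrComm_tmul, hD, ← mr₂_ρ23_assoc_tmul]; rfl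
  | add x y hx hy => simp only [map_add, hx, hy]

lemma mr₂_ρ13_LAm
    (hD : ∀ (Δ : L) (a : A), bl D (a • Δ) =
      LinearMap.rTensor A (lact k A L a) (bl D Δ))
    (t : L ⊗[k] A) :
    mr₂ k A L (ρ13 k A L (LAm k A L bl D t)) = mrComm k A L (bl D (mrComm k A L t)) := by
  induction t using TensorProduct.induction_on with
  | zero => simp
  | tmul ξ a => rw [mrComm_tmul, hD, ← mr₂_ρ13_assoc_tmul]; rfl
  | add x y hx hy => simp only [map_add, hx, hy]

variable {bl br}

lemma mrComm_bl_eq_neg (hanti : ∀ D Δ : L, bl D Δ = - (TensorProduct.comm k A L) (br Δ D))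
    (Δ : L) : mrComm k A L (bl D Δ) = - mr k A L (br Δ D) := by
  rw [hanti, map_neg]
  simp [mrComm]

end LeftAction

theorem double_lie_algebroid_zero_anchor_associative_products
    (bl : L →ₗ[k] L →ₗ[k] L ⊗[k] A) (br : L →ₗ[k] L →ₗ[k] A ⊗[k] L)
    -- antisymmetry: `{{D,Δ}}_l = -({{Δ,D}}_r)°`
    (hanti : ∀ D Δ : L, bl D Δ = - (TensorProduct.comm k A L) (br Δ D))
    -- Leibniz rules with zero anchor
    (hl1 : ∀ (D Δ : L) (a : A), bl D (a • Δ) =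
      LinearMap.rTensor A (lact k A L a) (bl D Δ))
    (hl2 : ∀ (D Δ : L) (a : A), bl D (op a • Δ) =
      LinearMap.lTensor L (LinearMap.mulRight k a) (bl D Δ))
    (hr1 : ∀ (D Δ : L) (a : A), br D (a • Δ) =
      LinearMap.rTensor L (LinearMap.mulLeft k a) (br D Δ))
    (hr2 : ∀ (D Δ : L) (a : A), br D (op a • Δ) =
      LinearMap.lTensor A (ract k A L a) (br D Δ))
    -- the double Jacobi identity, componentwise (zero anchor)
    (hJ1 : ∀ D₁ D₂ D₃ : L,
      LAm k A L bl D₁ (bl D₂ D₃) + ρ31 k A L (Bm k A L br D₃ (bl D₁ D₂)) = 0)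
    (hJ3 : ∀ D₁ D₂ D₃ : L,
      ρ23 k A L (Bm k A L br D₂ (bl D₃ D₁))
        + ρ13 k A L (LAm k A L bl D₃ (bl D₁ D₂)) = 0) :
    (∀ X Y Z : L,
      ml k A L (bl (ml k A L (bl X Y)) Z) = ml k A L (bl X (ml k A L (bl Y Z)))) ∧
    (∀ X Y Z : L,
      - mr k A L (br (- mr k A L (br X Y)) Z)
        = - mr k A L (br X (- mr k A L (br Y Z)))) := by
  constructor
  · intro X Y Z
    have h := congrArg (ml₂ k A L) (hJ1 X Y Z)
    rw [map_add, map_zero, ml₂_LAm bl X (hl2 X), ml₂_ρ31_Bm br Z (hr2 Z),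
      ml_comm_br_eq_neg Z hanti, add_neg_eq_zero] at h
    exact h.symm
  · intro X Y Z
    have h := congrArg (mr₂ k A L) (hJ3 Y X Z)
    rw [map_add, map_zero, mr₂_ρ23_Bm br X (hr1 X), mr₂_ρ13_LAm bl Z (hl1 Z),
      mrComm_bl_eq_neg Z hanti, mrComm_bl_eq_neg Z hanti, mrComm_bl_eq_neg Y hanti,
      add_neg_eq_zero] at h
    rw [h]
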